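/- In any stable matching M' of the reduced HR instance G', for every hospital h of the original instance, at most two level copies of h are active, and if two are active they are at consecutive levels s and s+1. -/

import Mathlib

open Finset

attribute [local instance] Classical.propDecidable

namespace HRLQ

variable {R H : Type}

/-- Number of levels in the reduced HR instance (`T = 2` for `G'`, `T = |R|` for `G''`). -/
def ell (H : Type) [Fintype H] (T : ℕ) (qm : H → ℕ) : ℕ := T + ∑ h, qm h

/-- Dummy residents of the reduced instance: a dummy `⟨h, s, i⟩` is the `i`-th level-`s`
dummy resident corresponding to hospital `h`; levels run over `0,…,ℓ-2`, there are
`q⁺(h)` dummies at levels `< T` and `q⁻(h)` dummies at levels `≥ T`. -/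
def Dummy (H : Type) [Fintype H] (T : ℕ) (qp qm : H → ℕ) : Type :=
  {x : Σ h : H, Fin (ell H T qm) × Fin (qp h) //
    x.2.1.val ≤ ell H T qm - 2 ∧ (T ≤ x.2.1.val → x.2.2.val < qm x.1)}

noncomputable instance [Fintype H] (T : ℕ) (qp qm : H → ℕ) : Fintype (Dummy H T qp qm) := by
  classical
  unfold Dummy
  infer_instance

variable [Fintype H]

def Dummy.h {T : ℕ} {qp qm : H → ℕ} (d : Dummy H T qp qm) : H := d.1.1
def Dummy.s {T : ℕ} {qp qm : H → ℕ} (d : Dummy H T qp qm) : ℕ := d.1.2.1.val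
def Dummy.i {T : ℕ} {qp qm : H → ℕ} (d : Dummy H T qp qm) : ℕ := d.1.2.2.val

/-- Residents of the reduced instance: original residents plus dummies. -/
def Res (R H : Type) [Fintype H] (T : ℕ) (qp qm : H → ℕ) : Type := R ⊕ Dummy H T qp qm

/-- Hospitals of the reduced instance: level copies `h^s`, `s ∈ {0,…,ℓ-1}`. -/
def Hos (H : Type) [Fintype H] (T : ℕ) (qm : H → ℕ) : Type := H × Fin (ell H T qm)

noncomputable instance [Fintype R] (T : ℕ) (qp qm : H → ℕ) : Fintype (Res R H T qp qm) := by
  unfold Res; infer_instance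

instance (T : ℕ) (qm : H → ℕ) : Fintype (Hos H T qm) := by
  unfold Hos; infer_instance

/-- Capacity of the level copy `h^s`. -/
def cap (T : ℕ) (qp qm : H → ℕ) (hs : Hos H T qm) : ℕ :=
  if hs.2.val < T then qp hs.1 else qm hs.1

/-- Acceptability (edges) in the reduced instance. A level-`s` dummy of `h` is acceptable to
`h^s` and `h^{s+1}`, except that the first `q⁺(h) - q⁻(h)` dummies at level `T-1` only list
`h^{T-1}`.  An original resident `r` is acceptable to every copy of each hospital on its list. -/
def edge (T : ℕ) (qp qm : H → ℕ) (E : R → H → Prop) :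
    Res R H T qp qm → Hos H T qm → Prop
  | Sum.inl r, hs => E r hs.1
  | Sum.inr d, hs => d.h = hs.1 ∧
      (hs.2.val = d.s ∨
        (hs.2.val = d.s + 1 ∧ ¬(d.s = T - 1 ∧ d.i < qp hs.1 - qm hs.1)))

/-- Rank (smaller = better) that a dummy assigns to hospital copies. -/
noncomputable def dkey {T : ℕ} {qp qm : H → ℕ} (d : Dummy H T qp qm) (a : Hos H T qm) : ℕ :=
  if a.1 = d.h ∧ a.2.val = d.s then 0
  else if a.1 = d.h ∧ a.2.val = d.s + 1 then 1 else 2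

/-- Preferences of residents of the reduced instance over hospital copies:
an original resident prefers higher level copies, and within a level follows its original
ranking `rankR` (smaller rank = more preferred); a level-`s` dummy of `h` has list `⟨h^s, h^{s+1}⟩`. -/
def prefRes (T : ℕ) (qp qm : H → ℕ) (rankR : R → H → ℕ) :
    Res R H T qp qm → Hos H T qm → Hos H T qm → Prop
  | Sum.inl r, a, b => b.2.val < a.2.val ∨ (a.2.val = b.2.val ∧ rankR r a.1 < rankR r b.1)
  | Sum.inr d, a, b => dkey d a < dkey d b

/-- Preference class of a resident in the list of `h^s`: level-`(s-1)` dummies of `h` first,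
then original residents, then level-`s` dummies of `h`. -/
noncomputable def hclass {T : ℕ} {qp qm : H → ℕ} (hs : Hos H T qm) : Res R H T qp qm → ℕ
  | Sum.inl _ => 1
  | Sum.inr d =>
      if d.h = hs.1 ∧ 1 ≤ hs.2.val ∧ d.s = hs.2.val - 1 then 0
      else if d.h = hs.1 ∧ d.s = hs.2.val then 2 else 3

/-- Rank within a preference class. -/
def hinner {T : ℕ} {qp qm : H → ℕ} (rankH : H → R → ℕ) (hs : Hos H T qm) :
    Res R H T qp qm → ℕ
  | Sum.inl r => rankH hs.1 r
  | Sum.inr d => d.i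

/-- Preferences of hospital copies over residents of the reduced instance. -/
def prefHos (T : ℕ) (qp qm : H → ℕ) (rankH : H → R → ℕ) (hs : Hos H T qm)
    (x y : Res R H T qp qm) : Prop :=
  hclass hs x < hclass hs y ∨
    (hclass hs x = hclass hs y ∧ hinner rankH hs x < hinner rankH hs y)

variable [Fintype R]

/-- The set of residents matched to the hospital copy `hs`. -/
noncomputable def mset {T : ℕ} {qp qm : H → ℕ}
    (M : Res R H T qp qm → Option (Hos H T qm)) (hs : Hos H T qm) :
    Finset (Res R H T qp qm) :=
  univ.filter (fun x => M x = some hs)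

/-- `M` is a matching of the reduced (HR) instance: it respects acceptability and capacities. -/
def isMatchingRed (T : ℕ) (qp qm : H → ℕ) (E : R → H → Prop)
    (M : Res R H T qp qm → Option (Hos H T qm)) : Prop :=
  (∀ x hs, M x = some hs → edge T qp qm E x hs) ∧
    ∀ hs, (mset M hs).card ≤ cap T qp qm hs

/-- `(x, hs)` is a blocking pair for `M` in the reduced instance. -/
def blocksRed (T : ℕ) (qp qm : H → ℕ) (E : R → H → Prop) (rankR : R → H → ℕ)
    (rankH : H → R → ℕ) (M : Res R H T qp qm → Option (Hos H T qm))
    (x : Res R H T qp qm) (hs : Hos H T qm) : Prop :=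
  edge T qp qm E x hs ∧
    (∀ hs', M x = some hs' → prefRes T qp qm rankR x hs hs') ∧
    ((mset M hs).card < cap T qp qm hs ∨
      ∃ y ∈ mset M hs, prefHos T qp qm rankH hs x y)

/-- Stability in the reduced HR instance. -/
def stableRed (T : ℕ) (qp qm : H → ℕ) (E : R → H → Prop) (rankR : R → H → ℕ)
    (rankH : H → R → ℕ) (M : Res R H T qp qm → Option (Hos H T qm)) : Prop :=
  isMatchingRed T qp qm E M ∧ ∀ x hs, ¬ blocksRed T qp qm E rankR rankH M x hs

/-- A hospital copy is active if it is matched to at least one non-dummy resident. -/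
def active {T : ℕ} {qp qm : H → ℕ}
    (M : Res R H T qp qm → Option (Hos H T qm)) (hs : Hos H T qm) : Prop :=
  ∃ r : R, M (Sum.inl r) = some hs

/-- The matching of the original HRLQ instance obtained from a matching of the reduced
instance: `r` is matched to `h` iff `r` is matched to some level copy of `h`. -/
def mapToG {T : ℕ} {qp qm : H → ℕ}
    (M : Res R H T qp qm → Option (Hos H T qm)) : R → Option H :=
  fun r => (M (Sum.inl r)).map Prod.fst

/-- Set of residents matched to `h` in a matching of the original instance. -/
noncomputable def msetO (N : R → Option H) (h : H) : Finset R :=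
  univ.filter (fun r => N r = some h)

/-- Feasibility in the original HRLQ instance. -/
def feasibleO (E : R → H → Prop) (qp qm : H → ℕ) (N : R → Option H) : Prop :=
  (∀ r h, N r = some h → E r h) ∧
    ∀ h, qm h ≤ (msetO N h).card ∧ (msetO N h).card ≤ qp h

/-- Cardinality of a matching of the original instance. -/
noncomputable def sizeO (N : R → Option H) : ℕ :=
  (univ.filter (fun r : R => N r ≠ none)).card

/-- `r ∈ R_i`: `r` is matched to a level-`i` hospital copy (unmatched residents are in `R_0`). -/
def inRlev {T : ℕ} {qp qm : H → ℕ}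
    (M : Res R H T qp qm → Option (Hos H T qm)) (i : ℕ) (r : R) : Prop :=
  (∃ hs, M (Sum.inl r) = some hs ∧ hs.2.val = i) ∨ (M (Sum.inl r) = none ∧ i = 0)

/-- `h ∈ H_j`: the copy `h^j` is active (with the convention that a hospital matched to no
resident is placed in `H_{T-1}` if it has no lower quota and in `H_{ℓ-1}` otherwise). -/
def inHlev (T : ℕ) (qp qm : H → ℕ)
    (M : Res R H T qp qm → Option (Hos H T qm)) (j : ℕ) (h : H) : Prop :=
  (∃ s : Fin (ell H T qm), s.val = j ∧ active M (h, s)) ∨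
    ((∀ r, mapToG M r ≠ some h) ∧
      ((qm h = 0 ∧ j = T - 1) ∨ (0 < qm h ∧ j = ell H T qm - 1)))

/-- Residents matched to `h` in `Mo` but not in `N`. -/
noncomputable def Aset (Mo N : R → Option H) (h : H) : Finset R :=
  msetO Mo h \ msetO N h

/-- Residents matched to `h` in `N` but not in `Mo`. -/
noncomputable def Bset (Mo N : R → Option H) (h : H) : Finset R :=
  msetO N h \ msetO Mo h

/-- `σ h` is a correspondence chosen by hospital `h` between `N(h) ∖ Mo(h)` and
`Mo(h) ∖ N(h)`: it is injective, maps into `Mo(h) ∖ N(h)`, and pairs as many residents as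
possible (unpaired residents correspond to `⊥`). -/
def validCorr (Mo N : R → Option H) (σ : H → R → Option R) : Prop :=
  ∀ h,
    (∀ r' ∈ Bset Mo N h, ∀ r, σ h r' = some r → r ∈ Aset Mo N h) ∧
    (∀ r₁ ∈ Bset Mo N h, ∀ r₂ ∈ Bset Mo N h, ∀ r,
        σ h r₁ = some r → σ h r₂ = some r → r₁ = r₂) ∧
    ((∀ r ∈ Aset Mo N h, ∃ r' ∈ Bset Mo N h, σ h r' = some r) ∨
      (∀ r' ∈ Bset Mo N h, σ h r' ≠ none))

/-- The vote of resident `r` comparing partners `x` (in `N`) and `y` (in `Mo`):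
`1` if `r` prefers `x`, `-1` if `r` prefers `y`, `0` if they coincide. -/
noncomputable def rvote (rankR : R → H → ℕ) (r : R) (x y : Option H) : ℤ :=
  if x = y then 0
  else
    match x, y with
    | some a, some b => if rankR r a < rankR r b then 1 else -1
    | some _, none => 1
    | none, _ => -1

/-- The net vote of hospital `h` for `N` against `Mo`, given the correspondence `σ h`:
each resident of `N(h) ∖ Mo(h)` is compared with its corresponding resident of
`Mo(h) ∖ N(h)` (or with `⊥`), and each unpaired resident of `Mo(h) ∖ N(h)` contributes one
vote for `Mo`. -/
noncomputable def hvote (rankH : H → R → ℕ) (Mo N : R → Option H)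
    (σ : H → R → Option R) (h : H) : ℤ :=
  (∑ r' ∈ Bset Mo N h,
      (match σ h r' with
        | some r => if rankH h r' < rankH h r then (1 : ℤ) else -1
        | none => 1)) -
    ((Aset Mo N h).filter (fun r => ∀ r' ∈ Bset Mo N h, σ h r' ≠ some r)).card

/-- Total net vote for `N` against `Mo` (given correspondences `σ`). -/
noncomputable def totalVote (rankR : R → H → ℕ) (rankH : H → R → ℕ)
    (N Mo : R → Option H) (σ : H → R → Option R) : ℤ :=
  (∑ r : R, rvote rankR r (N r) (Mo r)) + ∑ h : H, hvote rankH Mo N σ h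

/-- `Mo` is popular among the feasible matchings of the HRLQ instance. -/
def popularAmongFeasible (E : R → H → Prop) (rankR : R → H → ℕ) (rankH : H → R → ℕ)
    (qp qm : H → ℕ) (Mo : R → Option H) : Prop :=
  ∀ N, feasibleO E qp qm N → ∀ σ, validCorr Mo N σ → totalVote rankR rankH N Mo σ ≤ 0

end HRLQ

open HRLQ Finset

/-! Suppose `h^s` and `h^{s'}` are active with `s' ≥ s + 2`. Exactly `cap(h^{s'})` level-`(s'-1)`
dummies of `h` list `h^{s'}`, and `h^{s'}` prefers each of them to the original resident it holds.
By stability each such dummy is matched to `h^{s'-1}` or `h^{s'}`, and they cannot all fit into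
`h^{s'}` next to that resident, so one of them sits at `h^{s'-1}`. The original resident at `h^s`
prefers the higher copy `h^{s'-1}`, which ranks original residents above its own level dummies:
a blocking pair. -/

namespace HRLQ

variable {R H : Type} [Fintype H] {T : ℕ} {qp qm : H → ℕ}

lemma dkey_eq_one {d : Dummy H T qp qm} {a : Hos H T qm} (ha1 : a.1 = d.h)
    (ha2 : a.2.val = d.s + 1) : dkey d a = 1 := by
  simp [dkey, ha1, ha2]

lemma adjacent_of_dkey_le_one {d : Dummy H T qp qm} {a : Hos H T qm} (hle : dkey d a ≤ 1) :
    a.1 = d.h ∧ (a.2.val = d.s ∨ a.2.val = d.s + 1) := by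
  unfold dkey at hle
  split_ifs at hle with h0 h1
  · exact ⟨h0.1, Or.inl h0.2⟩
  · exact ⟨h1.1, Or.inr h1.2⟩
  · omega

lemma prefHos_inr_inl_of_succ_level (rankH : H → R → ℕ) {a : Hos H T qm}
    {d : Dummy H T qp qm} (r : R) (hdh : d.h = a.1) (hds : d.s + 1 = a.2.val) :
    prefHos T qp qm rankH a (Sum.inr d) (Sum.inl r) := by
  left
  show hclass a (Sum.inr d) < hclass a (Sum.inl r)
  simp only [hclass]
  rw [if_pos ⟨hdh, by omega, by omega⟩]
  omega

lemma prefHos_inl_inr_of_level (rankH : H → R → ℕ) {a : Hos H T qm}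
    {d : Dummy H T qp qm} (r : R) (hdh : d.h = a.1) (hds : d.s = a.2.val) :
    prefHos T qp qm rankH a (Sum.inl r) (Sum.inr d) := by
  left
  simp only [hclass, if_neg (show ¬(d.h = a.1 ∧ 1 ≤ a.2.val ∧ d.s = a.2.val - 1) by omega),
    if_pos (show d.h = a.1 ∧ d.s = a.2.val from ⟨hdh, hds⟩)]
  omega

/-- For `u = T` these are the last `q⁻(h)` of the `q⁺(h)` level-`(T-1)` dummies of `h`: the first
`q⁺(h) - q⁻(h)` of them do not list `h^T`. -/
lemma exists_cap_lower_dummies (E : R → H → Prop) (hT : 1 ≤ T) {h : H} (hq : qm h ≤ qp h)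
    (u : Fin (ell H T qm)) (hu : 1 ≤ u.val) :
    ∃ f : Fin (cap T qp qm (h, u)) → Dummy H T qp qm, Function.Injective f ∧
      ∀ i, (f i).h = h ∧ (f i).s + 1 = u.val ∧ edge T qp qm E (Sum.inr (f i)) (h, u) := by
  have hu' := u.2
  let idx : Fin (cap T qp qm (h, u)) → ℕ := fun i => if u.val = T then qp h - qm h + i else i
  have hidx : ∀ i, (idx i < qp h ∧ (T ≤ u.val - 1 → idx i < qm h)) ∧
      ¬(u.val - 1 = T - 1 ∧ idx i < qp h - qm h) := by
    intro i
    have hi := i.2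
    simp only [cap, idx] at hi ⊢
    split_ifs at hi ⊢ <;> omega
  let f : Fin (cap T qp qm (h, u)) → Dummy H T qp qm := fun i =>
    ⟨⟨h, ⟨u.val - 1, by omega⟩, ⟨idx i, (hidx i).1.1⟩⟩, show u.val - 1 ≤ _ by omega, (hidx i).1.2⟩
  refine ⟨f, fun i j hij => ?_, fun i => ⟨rfl, show u.val - 1 + 1 = u.val by omega, rfl, ?_⟩⟩
  · have hij' : idx i = idx j := congrArg Dummy.i hij
    simp only [idx] at hij'
    split_ifs at hij' <;> omega
  · exact Or.inr ⟨show u.val = u.val - 1 + 1 by omega, (hidx i).2⟩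

variable [Fintype R]

lemma mem_mset {M : Res R H T qp qm → Option (Hos H T qm)} {x : Res R H T qp qm}
    {a : Hos H T qm} : x ∈ mset M a ↔ M x = some a := by
  simp [mset]

lemma exists_not_mem_mset_of_injective {E : R → H → Prop}
    {M : Res R H T qp qm → Option (Hos H T qm)} (hM : isMatchingRed T qp qm E M)
    {a : Hos H T qm} {f : Fin (cap T qp qm a) → Res R H T qp qm} (hf : Function.Injective f)
    {x : Res R H T qp qm} (hx : x ∉ Set.range f) (hxa : M x = some a) :
    ∃ i, M (f i) ≠ some a := by
  by_contra! hall
  have hsub : insert x (univ.image f) ⊆ mset M a := by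
    intro y hy
    rcases mem_insert.mp hy with rfl | hy
    · exact mem_mset.2 hxa
    · obtain ⟨i, -, rfl⟩ := mem_image.mp hy
      exact mem_mset.2 (hall i)
  have hcard := (card_le_card hsub).trans (hM.2 a)
  rw [card_insert_of_notMem (by simpa using hx), card_image_of_injective _ hf, card_univ,
    Fintype.card_fin] at hcard
  omega

variable {E : R → H → Prop} {rankR : R → H → ℕ} {rankH : H → R → ℕ}
  {M : Res R H T qp qm → Option (Hos H T qm)}

lemma exists_not_prefRes_of_stableRed (hM : stableRed T qp qm E rankR rankH M)
    {x : Res R H T qp qm} {a : Hos H T qm} (hx : edge T qp qm E x a)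
    (hy : ∃ y ∈ mset M a, prefHos T qp qm rankH a x y) :
    ∃ b, M x = some b ∧ ¬ prefRes T qp qm rankR x a b := by
  by_contra! hno
  exact hM.2 x a ⟨hx, hno, Or.inr hy⟩

lemma dummy_matched_adjacent_of_stableRed (hM : stableRed T qp qm E rankR rankH M)
    {d : Dummy H T qp qm} {a : Hos H T qm} (ha1 : a.1 = d.h) (ha2 : a.2.val = d.s + 1)
    (hedge : edge T qp qm E (Sum.inr d) a) {r : R} (hr : M (Sum.inl r) = some a) :
    ∃ b, M (Sum.inr d) = some b ∧ b.1 = d.h ∧ (b.2.val = d.s ∨ b.2.val = d.s + 1) := by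
  obtain ⟨b, hb, hnp⟩ := exists_not_prefRes_of_stableRed hM hedge
    ⟨Sum.inl r, mem_mset.2 hr, prefHos_inr_inl_of_succ_level rankH r ha1.symm ha2.symm⟩
  refine ⟨b, hb, adjacent_of_dkey_le_one ?_⟩
  simp only [prefRes, dkey_eq_one ha1 ha2] at hnp
  omega

lemma exists_lower_dummy_matched_below (hM : stableRed T qp qm E rankR rankH M) (hT : 1 ≤ T)
    {h : H} (hq : qm h ≤ qp h) {u : Fin (ell H T qm)} (hu : 1 ≤ u.val) {r : R}
    (hr : M (Sum.inl r) = some (h, u)) :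
    ∃ d : Dummy H T qp qm, ∃ b, M (Sum.inr d) = some b ∧ b.1 = h ∧ b.2.val + 1 = u.val ∧
      d.h = h ∧ d.s = b.2.val := by
  obtain ⟨f, hf, hfu⟩ := exists_cap_lower_dummies E hT hq u hu
  obtain ⟨i, hi⟩ := exists_not_mem_mset_of_injective hM.1 (Sum.inr_injective.comp hf)
    (fun ⟨_, hi⟩ => Sum.inr_ne_inl hi) hr
  obtain ⟨hfh, hfs, hfe⟩ := hfu i
  obtain ⟨b, hb, hb1, hb2⟩ :=
    dummy_matched_adjacent_of_stableRed hM hfh.symm hfs.symm hfe hr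
  have hlow : b.2.val = (f i).s := by
    refine hb2.resolve_right fun hup => hi ?_
    have hbu : b = (h, u) := Prod.ext (hb1.trans hfh) (Fin.ext (show b.2.val = u.val by omega))
    exact hb.trans (congrArg some hbu)
  exact ⟨f i, b, hb, hb1.trans hfh, by omega, hfh, hlow.symm⟩

lemma blocksRed_inl_of_dummy_at_level (hM : isMatchingRed T qp qm E M) {r : R}
    {a b : Hos H T qm} (hr : M (Sum.inl r) = some b) (hb1 : b.1 = a.1) (hb2 : b.2.val < a.2.val)
    {d : Dummy H T qp qm} (hd : M (Sum.inr d) = some a) (hdh : d.h = a.1) (hds : d.s = a.2.val) :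
    blocksRed T qp qm E rankR rankH M (Sum.inl r) a := by
  refine ⟨show E r a.1 from hb1 ▸ hM.1 _ _ hr, fun b' hb' => ?_,
    Or.inr ⟨Sum.inr d, mem_mset.2 hd, prefHos_inl_inr_of_level rankH r hdh hds⟩⟩
  cases hr.symm.trans hb'
  exact Or.inl hb2

end HRLQ

theorem statement7_general {R H : Type} [Fintype R] [Fintype H]
    (E : R → H → Prop) (rankR : R → H → ℕ) (rankH : H → R → ℕ) (qp qm : H → ℕ)
    (hq : ∀ h, qm h ≤ qp h)
    (M : Res R H 2 qp qm → Option (Hos H 2 qm))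
    (hst : stableRed 2 qp qm E rankR rankH M)
    (h : H) (s s' : Fin (ell H 2 qm))
    (h1 : active M (h, s)) (h2 : active M (h, s')) :
    s'.val ≤ s.val + 1 := by
  by_contra! hgap
  obtain ⟨r, hr⟩ := h1
  obtain ⟨r', hr'⟩ := h2
  obtain ⟨d, b, hd, hb1, hb2, hdh, hds⟩ :=
    exists_lower_dummy_matched_below hst (by norm_num) (hq h) (by omega : 1 ≤ s'.val) hr'
  exact hst.2 _ _ (blocksRed_inl_of_dummy_at_level hst.1 hr hb1.symm
    (show s.val < b.2.val by omega) hd (hdh.trans hb1.symm) hds)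

/-- In any stable matching `M` of the reduced HR instance `G'`, at most two level copies of
any hospital `h` are active, and active copies are at consecutive levels. -/
theorem statement7 {R H : Type} [Fintype R] [Fintype H]
    (E : R → H → Prop) (rankR : R → H → ℕ) (rankH : H → R → ℕ) (qp qm : H → ℕ)
    (hq : ∀ h, qm h ≤ qp h)
    (M : Res R H 2 qp qm → Option (Hos H 2 qm))
    (hst : stableRed 2 qp qm E rankR rankH M)
    (h : H) (s s' : Fin (ell H 2 qm))
    (h1 : active M (h, s)) (h2 : active M (h, s')) (hle : s.val ≤ s'.val) :
    s'.val ≤ s.val + 1 :=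
  statement7_general E rankR rankH qp qm hq M hst h s s' h1 h2
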